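/- Let (G, τ) be a topological abelian group of finite exponent and H ≤ G an open subgroup. If (H, τ|_H) is a Mackey group, then (G, τ) is a Mackey group. -/

import Mathlib

open scoped Topology
open Filter

noncomputable section

abbrev Circle1 : Type := AddCircle (1 : ℝ)

def Tpos : Set Circle1 := (fun r : ℝ => (r : Circle1)) '' Set.Icc (-(1/4) : ℝ) (1/4)

variable {G : Type*}

def IsChar [AddCommGroup G] (τ : TopologicalSpace G) (φ : G →+ Circle1) : Prop :=
  @Continuous G Circle1 τ _ φ

def QuasiConvex [AddCommGroup G] (τ : TopologicalSpace G) (M : Set G) : Prop :=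
  ∀ x ∉ M, ∃ φ : G →+ Circle1, IsChar τ φ ∧ (∀ y ∈ M, φ y ∈ Tpos) ∧ φ x ∉ Tpos

def LocallyQuasiConvex [AddCommGroup G] (τ : TopologicalSpace G) : Prop :=
  ∀ U ∈ @nhds G τ 0, ∃ M ∈ @nhds G τ 0, QuasiConvex τ M ∧ M ⊆ U

def Compatible [AddCommGroup G] (τ τ' : TopologicalSpace G) : Prop :=
  ∀ φ : G →+ Circle1, IsChar τ φ ↔ IsChar τ' φ

def IsMackey [AddCommGroup G] (τ : TopologicalSpace G) : Prop :=
  @IsTopologicalAddGroup G τ _ ∧ LocallyQuasiConvex τ ∧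
    ∀ τ' : TopologicalSpace G, @IsTopologicalAddGroup G τ' _ →
      LocallyQuasiConvex τ' → Compatible τ τ' → τ ≤ τ'

def BoundedGroup (G : Type*) [AddCommGroup G] : Prop :=
  ∃ m : ℕ, 0 < m ∧ ∀ x : G, m • x = 0

def Precompact [AddCommGroup G] (τ : TopologicalSpace G) : Prop :=
  ∀ U ∈ @nhds G τ 0, ∃ F : Finset G, ∀ x : G, ∃ f ∈ F, x - f ∈ U

def LinearTop [AddCommGroup G] (τ : TopologicalSpace G) : Prop :=
  ∀ U ∈ @nhds G τ 0, ∃ H : AddSubgroup G, @IsOpen G τ (H : Set G) ∧ (H : Set G) ⊆ U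

def DuallyClosed [AddCommGroup G] (τ : TopologicalSpace G) (H : AddSubgroup G) : Prop :=
  ∀ x : G, x ∉ H → ∃ φ : G →+ Circle1, IsChar τ φ ∧ (∀ h ∈ H, φ h = 0) ∧ φ x ≠ 0

def WeakTop [AddCommGroup G] (τ : TopologicalSpace G) : TopologicalSpace G :=
  ⨅ φ : {φ : G →+ Circle1 // IsChar τ φ}, TopologicalSpace.induced φ.1 inferInstance

/-
Characters of the open subgroup `H` extend to `G` because the circle is divisible, and continuity
on an open subgroup is continuity on `G`; characters of `G ⧸ H` separate the points outside `H`.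
Together these make `τ` locally quasi-convex. If `τ'` is a compatible locally quasi-convex group
topology, boundedness forces `τ'` to be linear, so a `τ'|_H`-continuous character of `H` vanishes
on `N ∩ H` for some `τ'`-open subgroup `N` and extends to a `τ'`-continuous character of `G`. Hence
`τ|_H` and `τ'|_H` have the same characters, the Mackey property of `H` gives `τ|_H ≤ τ'|_H`, and
as `H` is `τ`-open this is `τ ≤ τ'` near `0`, hence everywhere.
-/

open Set

lemma zero_mem_Tpos : (0 : Circle1) ∈ Tpos :=
  ⟨0, by norm_num, rfl⟩

lemma Tpos_mem_nhds_zero : Tpos ∈ 𝓝 (0 : Circle1) :=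
  mem_of_superset ((QuotientAddGroup.isOpenMap_coe _ isOpen_Ioo).mem_nhds ⟨0, by norm_num, rfl⟩)
    (image_mono Ioo_subset_Icc_self)

lemma coe_notMem_Tpos {r : ℝ} (h₁ : 1 / 4 < r) (h₂ : r < 3 / 4) : (r : Circle1) ∉ Tpos := by
  rintro ⟨s, ⟨hs₁, hs₂⟩, hsr⟩
  have : s = r := (AddCircle.coe_eq_coe_iff_of_mem_Ico (a := -(1 / 4))
    ⟨hs₁, by linarith⟩ ⟨by linarith, by linarith⟩).mp hsr
  linarith

lemma exists_nsmul_coe_notMem_Tpos {r : ℝ} (h₀ : 0 < r) (h₁ : r ≤ 1 / 2) :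
    ∃ n : ℕ, ((n * r : ℝ) : Circle1) ∉ Tpos := by
  by_cases hr : 1 / 4 < r
  · exact ⟨1, by simpa using coe_notMem_Tpos hr (by linarith)⟩
  -- the first multiple of `r` beyond `1/4` overshoots it by at most `r ≤ 1/4`
  refine ⟨⌊1 / (4 * r)⌋₊ + 1, coe_notMem_Tpos ?_ ?_⟩ <;> push_cast
  · have := Nat.lt_floor_add_one (1 / (4 * r))
    rw [div_lt_iff₀ (by positivity)] at this
    linarith
  · have := Nat.floor_le (by positivity : 0 ≤ 1 / (4 * r))
    rw [le_div_iff₀ (by positivity)] at this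
    linarith

lemma eq_zero_of_forall_zsmul_mem_Tpos {t : Circle1} (h : ∀ j : ℤ, j • t ∈ Tpos) : t = 0 := by
  obtain ⟨r, ⟨hr₁, hr₂⟩, rfl⟩ : ∃ r ∈ Ico (-(1 / 2) : ℝ) (-(1 / 2) + 1), (r : Circle1) = t :=
    ⟨_, (AddCircle.equivIco 1 _ t).2, (AddCircle.equivIco 1 _).symm_apply_apply t⟩
  by_contra hr
  have hr₀ : r ≠ 0 := by rintro rfl; exact hr rfl
  obtain ⟨n, hn⟩ := exists_nsmul_coe_notMem_Tpos (abs_pos.mpr hr₀)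
    (abs_le.mpr ⟨by linarith, by linarith⟩)
  rcases abs_choice r with habs | habs
  · exact hn (by simpa [habs, ← AddCircle.coe_zsmul] using h n)
  · exact hn (by simpa [habs, ← AddCircle.coe_zsmul] using h (-n))

def ratCircleToCircle : AddCircle (1 : ℚ) →+ Circle1 :=
  QuotientAddGroup.map _ _ (Rat.castHom ℝ).toAddMonoidHom
    (AddSubgroup.zmultiples_le.mpr ⟨1, by simp⟩)

lemma ratCircleToCircle_injective : Function.Injective ratCircleToCircle := by
  rw [injective_iff_map_eq_zero]
  intro x hx
  induction x using QuotientAddGroup.induction_on with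
  | H q =>
    change ((q : ℝ) : Circle1) = 0 at hx
    obtain ⟨n, hn⟩ := (AddCircle.coe_eq_zero_iff 1).mp hx
    exact (AddCircle.coe_eq_zero_iff 1).mpr ⟨n, by simp only [zsmul_one] at hn ⊢; exact_mod_cast hn⟩

section Characters

variable {A B : Type*} [AddCommGroup A] [AddCommGroup B]

lemma exists_char_apply_ne_zero {a : A} (ha : a ≠ 0) : ∃ χ : A →+ Circle1, χ a ≠ 0 := by
  obtain ⟨c, hc⟩ := CharacterModule.exists_character_apply_ne_zero_of_ne_zero ha
  exact ⟨ratCircleToCircle.comp c, (map_ne_zero_iff _ ratCircleToCircle_injective).mpr hc⟩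

lemma exists_char_apply_notMem_Tpos {a : A} (ha : a ≠ 0) : ∃ χ : A →+ Circle1, χ a ∉ Tpos := by
  obtain ⟨χ, hχ⟩ := exists_char_apply_ne_zero ha
  obtain ⟨j, hj⟩ : ∃ j : ℤ, j • χ a ∉ Tpos := by
    by_contra! h
    exact hχ (eq_zero_of_forall_zsmul_mem_Tpos h)
  exact ⟨j • χ, hj⟩

lemma exists_char_comp_eq (f : A →+ B) (ψ : A →+ Circle1) (h : f.ker ≤ ψ.ker) :
    ∃ g : B →+ Circle1, g.comp f = ψ := by
  obtain ⟨g, hg⟩ := (Module.Baer.of_divisible Circle1).extension_property_addMonoidHom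
    (QuotientAddGroup.kerLift f) (QuotientAddGroup.kerLift_injective f)
    (QuotientAddGroup.lift f.ker ψ h)
  exact ⟨g, AddMonoidHom.ext fun a => DFunLike.congr_fun hg (a : A ⧸ f.ker)⟩

lemma AddSubgroup.exists_char_extension (H N : AddSubgroup A) (ψ : H →+ Circle1)
    (h : ∀ x : H, (x : A) ∈ N → ψ x = 0) :
    ∃ g : A →+ Circle1, g.comp H.subtype = ψ ∧ N ≤ g.ker := by
  obtain ⟨g, hg⟩ := exists_char_comp_eq ((QuotientAddGroup.mk' N).comp H.subtype) ψ
    fun x hx => h x ((QuotientAddGroup.eq_zero_iff _).mp hx)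
  exact ⟨g.comp (QuotientAddGroup.mk' N), hg, fun x hx => by
    simp [AddMonoidHom.mem_ker, (QuotientAddGroup.eq_zero_iff x).mpr hx]⟩

end Characters

lemma IsChar.comp_subtype [AddCommGroup G] {τ : TopologicalSpace G} {χ : G →+ Circle1}
    (hχ : IsChar τ χ) (H : AddSubgroup G) :
    IsChar (TopologicalSpace.induced (Subtype.val : H → G) τ) (χ.comp H.subtype) :=
  hχ.comp continuous_induced_dom

lemma zsmul_eq_emod_zsmul [AddGroup G] {x : G} {m : ℕ} (hm : m • x = 0) (j : ℤ) :
    j • x = (j % m) • x := by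
  conv_lhs => rw [← Int.emod_add_mul_ediv j m]
  rw [add_zsmul, mul_comm, mul_zsmul, natCast_zsmul, hm, zsmul_zero, add_zero]

section Topological

variable [AddCommGroup G] [t : TopologicalSpace G]

lemma LocallyQuasiConvex.induced_subtype (h : LocallyQuasiConvex t) (H : AddSubgroup G) :
    LocallyQuasiConvex (TopologicalSpace.induced (Subtype.val : H → G) t) := by
  intro U hU
  rw [nhds_induced] at hU
  obtain ⟨W, hW, hWU⟩ := hU
  obtain ⟨M, hM, hMqc, hMW⟩ := h W hW
  refine ⟨Subtype.val ⁻¹' M, by rw [nhds_induced]; exact preimage_mem_comap hM,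
    fun x hx => ?_, fun x hx => hWU (hMW hx)⟩
  obtain ⟨φ, hφ, hφM, hφx⟩ := hMqc x hx
  exact ⟨φ.comp H.subtype, hφ.comp_subtype H, fun y hy => hφM y hy, hφx⟩

variable [IsTopologicalAddGroup G]

lemma isChar_of_le_ker {N : AddSubgroup G} (hN : (N : Set G) ∈ 𝓝 0) {χ : G →+ Circle1}
    (h : N ≤ χ.ker) : IsChar t χ :=
  continuous_of_continuousAt_zero χ fun W hW => mem_map.mpr <| mem_of_superset hN fun n hn => by
    rw [mem_preimage, AddMonoidHom.mem_ker.mp (h hn), ← map_zero χ]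
    exact mem_of_mem_nhds hW

lemma isChar_of_isChar_comp_subtype {H : AddSubgroup G} (hH : IsOpen (H : Set G))
    {χ : G →+ Circle1}
    (hχ : IsChar (TopologicalSpace.induced (Subtype.val : H → G) t) (χ.comp H.subtype)) :
    IsChar t χ :=
  continuous_of_continuousAt_zero χ <|
    (continuousOn_iff_continuous_domRestrict.mpr hχ).continuousAt (hH.mem_nhds H.zero_mem)

lemma exists_isChar_extension_of_isOpen {H : AddSubgroup G} (hH : IsOpen (H : Set G))
    {ψ : H →+ Circle1} (hψ : IsChar (TopologicalSpace.induced (Subtype.val : H → G) t) ψ) :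
    ∃ g : G →+ Circle1, IsChar t g ∧ g.comp H.subtype = ψ := by
  obtain ⟨g, hg, -⟩ := H.exists_char_extension ⊥ ψ fun x hx => by
    rw [AddSubgroup.mem_bot, ZeroMemClass.coe_eq_zero] at hx
    rw [hx, map_zero]
  exact ⟨g, isChar_of_isChar_comp_subtype hH (hg ▸ hψ), hg⟩

lemma LinearTop.exists_isChar_extension (hlin : LinearTop t) (H : AddSubgroup G)
    {ψ : H →+ Circle1} (hψ : IsChar (TopologicalSpace.induced (Subtype.val : H → G) t) ψ) :
    ∃ g : G →+ Circle1, IsChar t g ∧ g.comp H.subtype = ψ := by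
  obtain ⟨W, hW, hWψ⟩ : ∃ W ∈ 𝓝 (0 : G), Subtype.val ⁻¹' W ⊆ ψ ⁻¹' Tpos := by
    have := hψ.continuousAt (x := 0) |>.preimage_mem_nhds ((map_zero ψ).symm ▸ Tpos_mem_nhds_zero)
    rwa [nhds_induced] at this
  obtain ⟨N, hN, hNW⟩ := hlin W hW
  have hker : ∀ x : H, (x : G) ∈ N → ψ x = 0 := fun x hx =>
    eq_zero_of_forall_zsmul_mem_Tpos fun j => by
      rw [← map_zsmul]
      exact hWψ (hNW (N.zsmul_mem hx j))
  obtain ⟨g, hg, hNg⟩ := H.exists_char_extension N ψ hker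
  exact ⟨g, isChar_of_le_ker (hN.mem_nhds N.zero_mem) hNg, hg⟩

lemma LocallyQuasiConvex.linearTop (hb : BoundedGroup G) (h : LocallyQuasiConvex t) :
    LinearTop t := by
  obtain ⟨m, hm, hmG⟩ := hb
  intro U hU
  obtain ⟨M, hM, hMqc, hMU⟩ := h U hU
  let N : AddSubgroup G := ⨅ φ : {φ : G →+ Circle1 // IsChar t φ ∧ ∀ y ∈ M, φ y ∈ Tpos}, φ.1.ker
  have hNM : (N : Set G) ⊆ M := fun x hx => by
    by_contra hxM
    obtain ⟨φ, hφ, hφM, hφx⟩ := hMqc x hxM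
    exact hφx ((AddSubgroup.mem_iInf.mp hx ⟨φ, hφ, hφM⟩ : φ x = 0) ▸ zero_mem_Tpos)
  -- by boundedness, finitely many multiples control all of them
  have hN : (N : Set G) ∈ 𝓝 0 := by
    have hV : (⋂ k ∈ Finset.Ico (0 : ℤ) m, (k • ·) ⁻¹' M) ∈ 𝓝 (0 : G) :=
      (biInter_finset_mem _).mpr fun k _ => (continuous_zsmul k).tendsto' 0 0 (zsmul_zero k) hM
    refine mem_of_superset hV fun x hx => AddSubgroup.mem_iInf.mpr fun ⟨φ, _, hφM⟩ => ?_
    refine eq_zero_of_forall_zsmul_mem_Tpos fun j => ?_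
    rw [← map_zsmul, zsmul_eq_emod_zsmul (hmG x)]
    refine hφM _ (mem_iInter₂.mp hx _ (Finset.mem_Ico.mpr ⟨Int.emod_nonneg _ ?_, ?_⟩))
    · exact_mod_cast hm.ne'
    · exact Int.emod_lt_of_pos _ (by exact_mod_cast hm)
  exact ⟨N, N.isOpen_of_mem_nhds hN, hNM.trans hMU⟩

lemma LocallyQuasiConvex.of_isOpen {H : AddSubgroup G} (hH : IsOpen (H : Set G))
    (h : LocallyQuasiConvex (TopologicalSpace.induced (Subtype.val : H → G) t)) :
    LocallyQuasiConvex t := by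
  intro U hU
  obtain ⟨M, hM, hMqc, hMU⟩ := h _ (continuous_subtype_val.continuousAt.preimage_mem_nhds hU)
  refine ⟨Subtype.val '' M, hH.isOpenMap_subtype_val.image_mem_nhds hM, fun x hx => ?_,
    image_subset_iff.mpr hMU⟩
  by_cases hxH : x ∈ H
  · obtain ⟨ψ, hψ, hψM, hψx⟩ := hMqc ⟨x, hxH⟩ fun hmem => hx ⟨_, hmem, rfl⟩
    obtain ⟨g, hg, rfl⟩ := exists_isChar_extension_of_isOpen hH hψ
    exact ⟨g, hg, forall_mem_image.mpr hψM, hψx⟩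
  · obtain ⟨ψ, hψx⟩ := exists_char_apply_notMem_Tpos ((QuotientAddGroup.eq_zero_iff x).not.mpr hxH)
    have hker : H ≤ (ψ.comp (QuotientAddGroup.mk' H)).ker := fun y hy => by
      simp [AddMonoidHom.mem_ker, (QuotientAddGroup.eq_zero_iff y).mpr hy]
    refine ⟨ψ.comp (QuotientAddGroup.mk' H), isChar_of_le_ker (hH.mem_nhds H.zero_mem) hker,
      ?_, hψx⟩
    rintro _ ⟨y, -, rfl⟩
    exact (AddMonoidHom.mem_ker.mp (hker y.2)).symm ▸ zero_mem_Tpos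

end Topological

lemma Compatible.induced_subtype [AddCommGroup G] {τ τ' : TopologicalSpace G}
    (hc : Compatible τ τ') {H : AddSubgroup G}
    (hext : ∀ ψ : H →+ Circle1, IsChar (TopologicalSpace.induced (Subtype.val : H → G) τ) ψ →
      ∃ g : G →+ Circle1, IsChar τ g ∧ g.comp H.subtype = ψ)
    (hext' : ∀ ψ : H →+ Circle1, IsChar (TopologicalSpace.induced (Subtype.val : H → G) τ') ψ →
      ∃ g : G →+ Circle1, IsChar τ' g ∧ g.comp H.subtype = ψ) :
    Compatible (TopologicalSpace.induced (Subtype.val : H → G) τ)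
      (TopologicalSpace.induced (Subtype.val : H → G) τ') := fun ψ =>
  ⟨fun hψ => by obtain ⟨g, hg, rfl⟩ := hext ψ hψ; exact ((hc g).mp hg).comp_subtype H,
    fun hψ => by obtain ⟨g, hg, rfl⟩ := hext' ψ hψ; exact ((hc g).mpr hg).comp_subtype H⟩

lemma le_of_nhds_zero_le [AddGroup G] {τ τ' : TopologicalSpace G}
    (htg : @IsTopologicalAddGroup G τ _) (htg' : @IsTopologicalAddGroup G τ' _)
    (h : @nhds G τ 0 ≤ @nhds G τ' 0) : τ ≤ τ' :=
  le_of_nhds_le_nhds fun x => by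
    rw [← @map_add_left_nhds_zero G τ _ htg, ← @map_add_left_nhds_zero G τ' _ htg' x]
    exact map_mono h

lemma le_of_induced_subtype_le [AddGroup G] {τ τ' : TopologicalSpace G}
    (htg : @IsTopologicalAddGroup G τ _) (htg' : @IsTopologicalAddGroup G τ' _)
    {H : AddSubgroup G} (hH : IsOpen[τ] (H : Set G))
    (h : TopologicalSpace.induced (Subtype.val : H → G) τ ≤
      TopologicalSpace.induced (Subtype.val : H → G) τ') : τ ≤ τ' :=
  le_of_nhds_zero_le htg htg' <| calc
    @nhds G τ 0 = map Subtype.val (@nhds H (.induced Subtype.val τ) 0) := by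
      rw [@map_nhds_subtype_val G τ, ZeroMemClass.coe_zero,
        @IsOpen.nhdsWithin_eq G τ _ _ hH H.zero_mem]
    _ ≤ map Subtype.val (@nhds H (.induced Subtype.val τ') 0) := map_mono (nhds_mono h)
    _ ≤ @nhds G τ' 0 := (@map_nhds_subtype_val G τ' _ 0).trans_le nhdsWithin_le_nhds

theorem stmt12 {G : Type*} [AddCommGroup G] (hb : BoundedGroup G)
    (τ : TopologicalSpace G) (htg : @IsTopologicalAddGroup G τ _)
    (H : AddSubgroup G) (hopen : @IsOpen G τ (H : Set G))
    (hHM : IsMackey (TopologicalSpace.induced (Subtype.val : H → G) τ)) :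
    IsMackey τ := by
  obtain ⟨-, hlqcH, hmaxH⟩ := hHM
  have hext := fun ψ : H →+ Circle1 => exists_isChar_extension_of_isOpen (ψ := ψ) hopen
  refine ⟨htg, hlqcH.of_isOpen hopen, fun τ' htg' hlqc' hc => ?_⟩
  exact le_of_induced_subtype_le htg htg' hopen <| hmaxH _ inferInstance (hlqc'.induced_subtype H)
    (hc.induced_subtype hext fun _ => (hlqc'.linearTop hb).exists_isChar_extension H)

end
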